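/- arXiv:1911.04401 — 2 statements merged into one kernel-verified Lean document; each statement's English description precedes it below -/
import Mathlib

section
/- Kropholler's corner lemma: Let G be a group, H a subgroup, and A, B be H-almost invariant subsets of G with AH = A and BH = B. If g ∈ G satisfies g ∈ A* (the complement of A) and g⁻¹ ∈ B*, then A ∩ gB is (H ∩ gHg⁻¹)-almost invariant. -/
open Pointwise

variable {G : Type*} [Group G]

/-- A subset `A` of `G` is `K`-finite if it is contained in finitely many right cosets of `K`. -/
def HFin (K : Subgroup G) (A : Set G) : Prop :=
  ∃ F : Set G, F.Finite ∧ A ⊆ (K : Set G) * F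

/-- `A` is `K`-almost invariant if `A Δ Ag` is `K`-finite for all `g`. -/
def AlmostInv (K : Subgroup G) (A : Set G) : Prop :=
  ∀ g : G, HFin K (symmDiff A ((· * g) '' A))

lemma hfin_mono {K : Subgroup G} {X Y : Set G} (h : HFin K X) (hsub : Y ⊆ X) : HFin K Y := by
  obtain ⟨F, hF, hXF⟩ := h
  exact ⟨F, hF, hsub.trans hXF⟩

lemma hfin_union {K : Subgroup G} {X Y : Set G} (hX : HFin K X) (hY : HFin K Y) :
    HFin K (X ∪ Y) := by
  obtain ⟨F, hF, hXF⟩ := hX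
  obtain ⟨F', hF', hYF⟩ := hY
  refine ⟨F ∪ F', hF.union hF', ?_⟩
  rw [Set.mul_union]
  exact Set.union_subset_union hXF hYF

lemma hfin_inf {K K' : Subgroup G} {X : Set G} (h : HFin K X) (h' : HFin K' X) :
    HFin (K ⊓ K') X := by
  classical
  obtain ⟨F, hF, hXF⟩ := h
  obtain ⟨F', hF', hXF'⟩ := h'
  let c : G × G → G := fun p =>
    if hne : (X ∩ ((K : Set G) * {p.1}) ∩ ((K' : Set G) * {p.2})).Nonempty then hne.some else 1
  refine ⟨c '' (F ×ˢ F'), (hF.prod hF').image c, ?_⟩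
  intro a ha
  obtain ⟨k, hk, f, hf, hkf⟩ := Set.mem_mul.mp (hXF ha)
  obtain ⟨k', hk', f', hf', hkf'⟩ := Set.mem_mul.mp (hXF' ha)
  have haf : a ∈ (K : Set G) * {f} := Set.mem_mul.mpr ⟨k, hk, f, rfl, hkf⟩
  have haf' : a ∈ (K' : Set G) * {f'} := Set.mem_mul.mpr ⟨k', hk', f', rfl, hkf'⟩
  have hne : (X ∩ ((K : Set G) * {f}) ∩ ((K' : Set G) * {f'})).Nonempty :=
    ⟨a, ⟨ha, haf⟩, haf'⟩
  have hz : c (f, f') ∈ X ∩ ((K : Set G) * {f}) ∩ ((K' : Set G) * {f'}) := by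
    simp only [c]
    rw [dif_pos hne]
    exact hne.some_mem
  set z := c (f, f') with hzdef
  obtain ⟨⟨hzX, hzf⟩, hzf'⟩ := hz
  obtain ⟨kz, hkz, fz, hfz, hkfz⟩ := Set.mem_mul.mp hzf
  obtain ⟨kz', hkz', fz', hfz', hkfz'⟩ := Set.mem_mul.mp hzf'
  rw [Set.mem_singleton_iff] at hfz hfz'
  rw [hfz] at hkfz
  rw [hfz'] at hkfz'
  refine Set.mem_mul.mpr ⟨a * z⁻¹, ?_, z, ⟨(f, f'), Set.mk_mem_prod hf hf', rfl⟩, by group⟩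
  have hK : a * z⁻¹ ∈ K := by
    have : a * z⁻¹ = k * kz⁻¹ := by rw [← hkf, ← hkfz]; group
    rw [this]
    exact mul_mem hk (inv_mem hkz)
  have hK' : a * z⁻¹ ∈ K' := by
    have : a * z⁻¹ = k' * kz'⁻¹ := by rw [← hkf', ← hkfz']; group
    rw [this]
    exact mul_mem hk' (inv_mem hkz')
  exact ⟨hK, hK'⟩


lemma key {H : Subgroup G} {A : Set G} (hA : AlmostInv H A) (hAH : A * (H : Set G) = A)
    {g : G} (hg : g ∉ A) {F : Set G} (hF : F.Finite) :
    ∃ F₂ : Set G, F₂.Finite ∧ A ∩ ({g} * (H : Set G) * F) ⊆ (H : Set G) * F₂ := by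
  classical
  choose S hSfin hS using hA
  refine ⟨⋃ f ∈ F, S f⁻¹ * {f},
    hF.biUnion (fun f _ => (hSfin f⁻¹).mul (Set.finite_singleton f)), ?_⟩
  rintro a ⟨haA, hmem⟩
  obtain ⟨y, hy, f, hf, hyf⟩ := Set.mem_mul.mp hmem
  obtain ⟨g', hg', h, hh, hgh'⟩ := Set.mem_mul.mp hy
  rw [Set.mem_singleton_iff] at hg'
  rw [hg'] at hgh'
  -- hyf : y * f = a, hgh' : g * h = y
  have hhH : h ∈ H := hh
  have hghA : g * h ∉ A := by
    intro hmem2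
    apply hg
    have : (g * h) * h⁻¹ ∈ A * (H : Set G) :=
      Set.mul_mem_mul hmem2 (by simpa using inv_mem hhH)
    rwa [hAH, mul_inv_cancel_right] at this
  have hsd : g * h ∈ symmDiff A ((· * f⁻¹) '' A) := by
    rw [Set.mem_symmDiff]
    right
    refine ⟨⟨a, haA, ?_⟩, hghA⟩
    rw [← hyf, ← hgh']; group
  obtain ⟨h', hh', s, hs, hhs⟩ := Set.mem_mul.mp (hS f⁻¹ hsd)
  refine Set.mem_mul.mpr ⟨h', hh', s * f,
    Set.mem_biUnion hf (Set.mul_mem_mul hs rfl), ?_⟩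
  rw [← hyf, ← hgh', ← mul_assoc, hhs]

lemma key' {H : Subgroup G} {B : Set G} (hB : AlmostInv H B) (hBH : B * (H : Set G) = B)
    {g : G} (hg : g⁻¹ ∉ B) {F : Set G} (hF : F.Finite) :
    ∃ F₂ : Set G, F₂.Finite ∧
      ((g * ·) '' B) ∩ ((H : Set G) * F) ⊆ {g} * (H : Set G) * F₂ := by
  classical
  choose S hSfin hS using hB
  refine ⟨⋃ f ∈ F, S f⁻¹ * {f},
    hF.biUnion (fun f _ => (hSfin f⁻¹).mul (Set.finite_singleton f)), ?_⟩
  rintro y ⟨⟨b, hbB, rfl⟩, hmem⟩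
  obtain ⟨h, hh, f, hf, hhf⟩ := Set.mem_mul.mp hmem
  -- hhf : h * f = g * b
  have hhH : h ∈ H := hh
  have hb' : g⁻¹ * h ∉ B := by
    intro hmem2
    apply hg
    have : (g⁻¹ * h) * h⁻¹ ∈ B * (H : Set G) :=
      Set.mul_mem_mul hmem2 (by simpa using inv_mem hhH)
    rwa [hBH, mul_inv_cancel_right] at this
  have hb : b = g⁻¹ * (h * f) := by rw [hhf]; group
  have hsd : g⁻¹ * h ∈ symmDiff B ((· * f⁻¹) '' B) := by
    rw [Set.mem_symmDiff]
    right
    refine ⟨⟨b, hbB, ?_⟩, hb'⟩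
    rw [hb]; group
  obtain ⟨h', hh', s, hs, hhs⟩ := Set.mem_mul.mp (hS f⁻¹ hsd)
  refine Set.mem_mul.mpr ⟨g * h', Set.mem_mul.mpr ⟨g, rfl, h', hh', rfl⟩, s * f,
    Set.mem_biUnion hf (Set.mul_mem_mul hs rfl), ?_⟩
  have : g * h' * (s * f) = g * (h' * s) * f := by group
  rw [this, hhs, hb]; group

lemma hfin_conj {H : Subgroup G} (g : G) {F : Set G} (hF : F.Finite) {X : Set G}
    (hX : X ⊆ {g} * (H : Set G) * F) :
    HFin (Subgroup.map (MulAut.conj g).toMonoidHom H) X := by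
  refine ⟨(g * ·) '' F, hF.image _, hX.trans ?_⟩
  rintro y hy
  obtain ⟨z, hz, f, hf, hzf⟩ := Set.mem_mul.mp hy
  obtain ⟨g', hg', h, hh, hgh⟩ := Set.mem_mul.mp hz
  rw [Set.mem_singleton_iff] at hg'
  rw [hg'] at hgh
  refine Set.mem_mul.mpr ⟨g * h * g⁻¹, ?_, g * f, ⟨f, hf, rfl⟩, ?_⟩
  · simp only [SetLike.mem_coe, Subgroup.mem_map]
    exact ⟨h, hh, by simp [MulAut.conj_apply]⟩
  · rw [← hzf, ← hgh]; group

lemma symmDiff_inter_subset (a a' b b' : Set G) :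
    symmDiff (a ∩ b) (a' ∩ b') ⊆ ((a ∪ a') ∩ symmDiff b b') ∪ ((b ∪ b') ∩ symmDiff a a') := by
  intro y hy
  simp only [Set.mem_symmDiff, Set.mem_inter_iff, Set.mem_union] at *
  tauto

lemma lg_symmdiff {B : Set G} {g x : G} {T : Set G}
    (h : symmDiff B ((· * x) '' B) ⊆ T) :
    symmDiff ((g * ·) '' B) ((· * x) '' ((g * ·) '' B)) ⊆ (g * ·) '' T := by
  intro y hy
  rw [Set.mem_symmDiff] at hy
  rcases hy with ⟨⟨b, hb, rfl⟩, hnot⟩ | ⟨⟨z, ⟨b, hb, rfl⟩, rfl⟩, hnot⟩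
  · refine ⟨b, h ?_, rfl⟩
    rw [Set.mem_symmDiff]
    left
    refine ⟨hb, ?_⟩
    rintro ⟨b', hb', hbx⟩
    exact hnot ⟨g * b', ⟨b', hb', rfl⟩, by rw [← hbx]; group⟩
  · refine ⟨b * x, h ?_, by group⟩
    rw [Set.mem_symmDiff]
    right
    refine ⟨⟨b, hb, rfl⟩, ?_⟩
    intro hbxB
    exact hnot ⟨b * x, hbxB, by group⟩

lemma preimage_mul_right_eq (W : Set G) (x : G) : (· * x) ⁻¹' W = W * {x⁻¹} := by
  rw [Set.mul_singleton, Set.image_mul_right, inv_inv]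

theorem kropholler_corner (H : Subgroup G) (A B : Set G)
    (hA : AlmostInv H A) (hB : AlmostInv H B)
    (hAH : A * (H : Set G) = A) (hBH : B * (H : Set G) = B)
    (g : G) (hg : g ∈ Aᶜ) (hg' : g⁻¹ ∈ Bᶜ) :
    AlmostInv (H ⊓ Subgroup.map (MulAut.conj g).toMonoidHom H) (A ∩ (g * ·) '' B) := by
  intro x
  set LgB : Set G := (g * ·) '' B with hLgB
  obtain ⟨FA, hFAf, hFA⟩ := hA x
  obtain ⟨FB, hFBf, hFB⟩ := hB x
  obtain ⟨F4, hF4f, hsub4⟩ := key hA hAH hg hFBf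
  obtain ⟨F5, hF5f, hsub5⟩ := key hA hAH hg (hFBf.mul (Set.finite_singleton x⁻¹))
  obtain ⟨F2, hF2f, hsub2⟩ := key' hB hBH hg' hFAf
  obtain ⟨F3, hF3f, hsub3⟩ := key' hB hBH hg' (hFAf.mul (Set.finite_singleton x⁻¹))
  set P1 : Set G := (A ∪ (· * x) '' A) ∩ symmDiff LgB ((· * x) '' LgB) with hP1
  set P2 : Set G := (LgB ∪ (· * x) '' LgB) ∩ symmDiff A ((· * x) '' A) with hP2
  have hD : symmDiff (A ∩ LgB) ((· * x) '' (A ∩ LgB)) ⊆ P1 ∪ P2 := by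
    have himg : (· * x) '' (A ∩ LgB) = ((· * x) '' A) ∩ ((· * x) '' LgB) :=
      Set.image_inter (mul_left_injective x)
    rw [himg]
    exact symmDiff_inter_subset A ((· * x) '' A) LgB ((· * x) '' LgB)
  -- P1 bounds
  have h1K : P1 ⊆ {g} * (H : Set G) * FB := by
    refine (Set.inter_subset_right).trans ((lg_symmdiff hFB).trans ?_)
    rw [← Set.singleton_mul, mul_assoc]
  have h1H : HFin H P1 := by
    refine ⟨F4 ∪ F5 * {x}, hF4f.union (hF5f.mul (Set.finite_singleton x)), ?_⟩
    have hsplit : P1 ⊆ (A ∩ ({g} * (H : Set G) * FB)) ∪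
        (((· * x) '' A) ∩ ({g} * (H : Set G) * FB)) := by
      intro y hy
      rcases hy.1 with h | h
      · exact Or.inl ⟨h, h1K hy⟩
      · exact Or.inr ⟨h, h1K hy⟩
    refine hsplit.trans ?_
    rw [Set.mul_union]
    refine Set.union_subset_union hsub4 ?_
    have : ((· * x) '' A) ∩ ({g} * (H : Set G) * FB)
        = (· * x) '' (A ∩ ({g} * (H : Set G) * (FB * {x⁻¹}))) := by
      rw [← Set.image_inter_preimage, preimage_mul_right_eq, mul_assoc]
    rw [this]
    refine (Set.image_mono hsub5).trans ?_
    rw [← Set.mul_singleton, mul_assoc]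
  have h1 : HFin (H ⊓ Subgroup.map (MulAut.conj g).toMonoidHom H) P1 :=
    hfin_inf h1H (hfin_conj g hFBf h1K)
  -- P2 bounds
  have h2H : HFin H P2 := ⟨FA, hFAf, Set.inter_subset_right.trans hFA⟩
  have h2K : HFin (Subgroup.map (MulAut.conj g).toMonoidHom H) P2 := by
    refine hfin_conj (H := H) g ((hF2f.union (hF3f.mul (Set.finite_singleton x))) : (F2 ∪ F3 * {x}).Finite) ?_
    have hsplit : P2 ⊆ (LgB ∩ ((H : Set G) * FA)) ∪
        (((· * x) '' LgB) ∩ ((H : Set G) * FA)) := by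
      intro y hy
      rcases hy.1 with h | h
      · exact Or.inl ⟨h, hFA hy.2⟩
      · exact Or.inr ⟨h, hFA hy.2⟩
    refine hsplit.trans ?_
    rw [Set.mul_union]
    refine Set.union_subset_union hsub2 ?_
    have : ((· * x) '' LgB) ∩ ((H : Set G) * FA)
        = (· * x) '' (LgB ∩ ((H : Set G) * (FA * {x⁻¹}))) := by
      rw [← Set.image_inter_preimage, preimage_mul_right_eq, mul_assoc]
    rw [this]
    refine (Set.image_mono hsub3).trans ?_
    rw [← Set.mul_singleton, mul_assoc]
  have h2 : HFin (H ⊓ Subgroup.map (MulAut.conj g).toMonoidHom H) P2 :=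
    hfin_inf h2H h2K
  exact hfin_mono (hfin_union h1 h2) hD
end

section
/- Let G be a group, H ≤ G, and suppose C ⊆ G satisfies CH = C and C ⊆ KF for a subgroup K ≤ G and a finite set F ⊆ G, and C is nonempty. Then there exists x ∈ C such that [H : H ∩ x⁻¹Kx] < ∞. -/
/-!
Take any `x ∈ C`. Right `H`-invariance gives `xH ⊆ C ⊆ KF`, so the subgroup `xHx⁻¹` is covered
by the finitely many right cosets `K(fx⁻¹)`. A subgroup covered by finitely many right cosets of
`K` meets only finitely many of them, so `[xHx⁻¹ : xHx⁻¹ ∩ K]` is finite, and conjugating back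
by `x⁻¹` gives `[H : H ∩ x⁻¹Kx] < ∞`.
-/

open Pointwise

variable {G : Type*} [Group G]

namespace Subgroup

theorem relIndex_ne_zero_of_subset_mul_finite {H K : Subgroup G} {F : Set G}
    (hF : F.Finite) (hHKF : (H : Set G) ⊆ K * F) : K.relIndex H ≠ 0 := by
  -- Covering `h⁻¹` rather than `h` puts `h` in a left coset `f⁻¹K`, matching `H ⧸ K.subgroupOf H`.
  have hcover : ∀ h : H, ∃ f ∈ F, (h : G)⁻¹ * f⁻¹ ∈ K := fun h => by
    obtain ⟨k, hk, f, hf, hkf⟩ := hHKF (H.inv_mem h.2)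
    exact ⟨f, hf, by simpa [← hkf] using hk⟩
  choose f hfF hfK using hcover
  have : Finite F := hF.to_subtype
  have : Finite (H ⧸ K.subgroupOf H) := by
    refine Finite.of_injective (fun q => (⟨f q.out, hfF _⟩ : F)) fun q₁ q₂ hq => ?_
    rw [← q₁.out_eq', ← q₂.out_eq', QuotientGroup.eq, mem_subgroupOf]
    have := K.mul_mem (hfK q₁.out) (K.inv_mem (hfK q₂.out))
    simp_all [Subtype.ext_iff, mul_assoc]
  exact index_ne_zero_of_finite

theorem relIndex_map_conj_inv (K H : Subgroup G) (x : G) :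
    (K.map (MulAut.conj x⁻¹).toMonoidHom).relIndex H =
      K.relIndex (H.map (MulAut.conj x).toMonoidHom) := by
  rw [map_equiv_eq_comap_symm', ← relIndex_comap, map_inv]
  rfl

end Subgroup

theorem finite_relindex_of_subset_KF (H K : Subgroup G) (F : Set G) (hF : F.Finite)
    (C : Set G) (hCne : C.Nonempty) (hCH : C * (H : Set G) = C)
    (hCKF : C ⊆ (K : Set G) * F) :
    ∃ x ∈ C, (Subgroup.map (MulAut.conj x⁻¹).toMonoidHom K).relIndex H ≠ 0 := by
  obtain ⟨x, hx⟩ := hCne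
  refine ⟨x, hx, ?_⟩
  rw [Subgroup.relIndex_map_conj_inv]
  refine Subgroup.relIndex_ne_zero_of_subset_mul_finite (hF.mul (Set.finite_singleton x⁻¹)) ?_
  rintro _ ⟨h, hh, rfl⟩
  have hxh : x * h ∈ (K : Set G) * F := hCKF (hCH ▸ Set.mul_mem_mul hx hh)
  rw [← mul_assoc]
  exact Set.mul_mem_mul hxh rfl
end
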